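/- For a read-once formula φ = φ_l ∘ φ_r (∘ ∈ {∧, ∨, ⊕}) over disjoint variable sets and a total assignment X, the DEPENDS recursion correctly computes the flip distance: defining deps(ψ) = 1 for a leaf, deps(¬ψ) = deps(ψ), and for a binary gate deps(φ) = deps(φ_l) + deps(φ_r) if flipping neither single child's value alone changes φ's value, and deps(φ) = min over the children whose single flip changes φ's value otherwise, one has deps(φ) = d(φ, X) for every read-once φ that is non-constant. -/

import Mathlib

/-- Propositional formulae over variables `α`, with connectives ¬, ∧, ∨, ⊕. -/
inductive Fm (α : Type) : Type
  | var : α → Fm α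
  | not : Fm α → Fm α
  | and : Fm α → Fm α → Fm α
  | or  : Fm α → Fm α → Fm α
  | xor : Fm α → Fm α → Fm α

/-- Classical two-valued evaluation under a total assignment. -/
def evalB {α : Type} (σ : α → Bool) : Fm α → Bool
  | .var v => σ v
  | .not φ => !(evalB σ φ)
  | .and φ ψ => evalB σ φ && evalB σ ψ
  | .or φ ψ => evalB σ φ || evalB σ ψ
  | .xor φ ψ => Bool.xor (evalB σ φ) (evalB σ ψ)

/-- Strong Kleene (K3) three-valued evaluation under a partial assignment;
`none` denotes "unassigned". -/
def evalK {α : Type} (τ : α → Option Bool) : Fm α → Option Bool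
  | .var v => τ v
  | .not φ => (evalK τ φ).map (fun b => !b)
  | .and φ ψ =>
      match evalK τ φ, evalK τ ψ with
      | some false, _ => some false
      | _, some false => some false
      | some true, some true => some true
      | _, _ => none
  | .or φ ψ =>
      match evalK τ φ, evalK τ ψ with
      | some true, _ => some true
      | _, some true => some true
      | some false, some false => some false
      | _, _ => none
  | .xor φ ψ =>
      match evalK τ φ, evalK τ ψ with
      | some a, some b => some (Bool.xor a b)
      | _, _ => none

/-- The total assignment `σ` extends the partial assignment `τ`. -/
def Extends {α : Type} (τ : α → Option Bool) (σ : α → Bool) : Prop :=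
  ∀ v b, τ v = some b → σ v = b

/-- The list of variables occurring in a formula (with multiplicity). -/
def varsOf {α : Type} : Fm α → List α
  | .var v => [v]
  | .not φ => varsOf φ
  | .and φ ψ => varsOf φ ++ varsOf ψ
  | .or φ ψ => varsOf φ ++ varsOf ψ
  | .xor φ ψ => varsOf φ ++ varsOf ψ

/-- A read-once formula: each variable occurs at most once. -/
def ReadOnce {α : Type} (φ : Fm α) : Prop := (varsOf φ).Nodup

/-- Flip the bits of a total assignment at the variables in `S`. -/
def flipV {α : Type} [DecidableEq α] (X : α → Bool) (S : Finset α) : α → Bool :=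
  fun v => if v ∈ S then !(X v) else X v

/-- Flip distance of a formula: minimum number of variables whose values must
be flipped in `X` to change the truth value of `φ`. -/
noncomputable def fmDist {α : Type} [DecidableEq α] (φ : Fm α) (X : α → Bool) : ℕ :=
  sInf {k : ℕ | ∃ S : Finset α, S.card = k ∧ evalB (flipV X S) φ ≠ evalB X φ}

/-- The DEPENDS recursion: `1` at leaves, passed through ¬, and at a binary
gate either the sum of the children's values (if flipping neither single
child's value alone changes the gate's value) or the min over the children
whose single flip changes the gate's value. -/
def deps {α : Type} (X : α → Bool) : Fm α → ℕ
  | .var _ => 1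
  | .not φ => deps X φ
  | .and φ ψ =>
      let a := evalB X φ; let b := evalB X ψ
      if ((!a) && b) ≠ (a && b) then
        if (a && !b) ≠ (a && b) then min (deps X φ) (deps X ψ) else deps X φ
      else if (a && !b) ≠ (a && b) then deps X ψ
      else deps X φ + deps X ψ
  | .or φ ψ =>
      let a := evalB X φ; let b := evalB X ψ
      if ((!a) || b) ≠ (a || b) then
        if (a || !b) ≠ (a || b) then min (deps X φ) (deps X ψ) else deps X φ
      else if (a || !b) ≠ (a || b) then deps X ψ
      else deps X φ + deps X ψ
  | .xor φ ψ =>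
      let a := evalB X φ; let b := evalB X ψ
      if Bool.xor (!a) b ≠ Bool.xor a b then
        if Bool.xor a (!b) ≠ Bool.xor a b then min (deps X φ) (deps X ψ) else deps X φ
      else if Bool.xor a (!b) ≠ Bool.xor a b then deps X ψ
      else deps X φ + deps X ψ

/-!
A flip set `S` of a read-once gate `g φl φr` splits into its parts on the disjoint variable
sets of the two children, which act independently. So the flip distance of the gate is the
minimum, over the pairs `(p, q)` of child flips that change the value of `g`, of
`[p] d(φl) + [q] d(φr)`, and the case distinction of `deps` evaluates exactly this minimum.
Since and, or and xor are non-constant, such a pair always exists, so by induction every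
read-once formula has an optimal flip set, contained in its own variables.
-/

theorem evalB_congr {α : Type} {φ : Fm α} {X Y : α → Bool} (h : ∀ v ∈ varsOf φ, X v = Y v) :
    evalB X φ = evalB Y φ := by
  induction φ <;> simp_all [evalB, varsOf]

/-- The binary-gate case of `deps`. -/
def gateDist (g : Bool → Bool → Bool) (a b : Bool) (dl dr : ℕ) : ℕ :=
  if g (!a) b ≠ g a b then
    if g a (!b) ≠ g a b then min dl dr else dl
  else if g a (!b) ≠ g a b then dr
  else dl + dr

theorem gateDist_le {g : Bool → Bool → Bool} {a b p q : Bool} (h : g (a ^^ p) (b ^^ q) ≠ g a b)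
    (dl dr : ℕ) : gateDist g a b dl dr ≤ (if p then dl else 0) + (if q then dr else 0) := by
  unfold gateDist
  cases p <;> cases q <;> simp_all <;> split_ifs <;> omega

theorem exists_gateDist_eq {g : Bool → Bool → Bool}
    (hg : ∀ a b, ∃ p q : Bool, g (a ^^ p) (b ^^ q) ≠ g a b) (a b : Bool) (dl dr : ℕ) :
    ∃ p q : Bool, g (a ^^ p) (b ^^ q) ≠ g a b ∧
      gateDist g a b dl dr = (if p then dl else 0) + (if q then dr else 0) := by
  unfold gateDist
  split_ifs with hl hr hr
  · rcases le_total dl dr with hle | hle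
    · exact ⟨true, false, by simpa using hl, by simp [hle]⟩
    · exact ⟨false, true, by simpa using hr, by simp [hle]⟩
  · exact ⟨true, false, by simpa using hl, by simp⟩
  · exact ⟨false, true, by simpa using hr, by simp⟩
  · obtain ⟨p, q, hpq⟩ := hg a b
    cases p <;> cases q <;> simp_all

section FlipDistance

variable {α : Type} [DecidableEq α]

theorem evalB_flipV_congr {φ : Fm α} (X : α → Bool) {S T : Finset α}
    (h : ∀ v ∈ varsOf φ, v ∈ S ↔ v ∈ T) :
    evalB (flipV X S) φ = evalB (flipV X T) φ :=
  evalB_congr fun v hv => by simp only [flipV, h v hv]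

theorem evalB_flipV_empty (φ : Fm α) (X : α → Bool) : evalB (flipV X ∅) φ = evalB X φ :=
  evalB_congr fun v _ => by simp [flipV]

theorem evalB_flipV_filter (φ : Fm α) (X : α → Bool) (S : Finset α) :
    evalB (flipV X (S.filter (· ∈ varsOf φ))) φ = evalB (flipV X S) φ :=
  evalB_flipV_congr X fun v hv => by simp [hv]

theorem evalB_flipV_union_of_disjoint {φ : Fm α} (X : α → Bool) {S T : Finset α}
    (hT : ∀ v ∈ T, v ∉ varsOf φ) :
    evalB (flipV X (S ∪ T)) φ = evalB (flipV X S) φ :=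
  evalB_flipV_congr X fun v hv => by
    simp only [Finset.mem_union, or_iff_left fun h => hT v h hv]

/-- `d` is the flip distance of `φ` at `X`, attained by flipping variables of `φ` only. -/
structure IsFlipDist (φ : Fm α) (X : α → Bool) (d : ℕ) : Prop where
  exists_flip : ∃ S : Finset α, (∀ v ∈ S, v ∈ varsOf φ) ∧ S.card = d ∧
    evalB (flipV X S) φ ≠ evalB X φ
  le_card : ∀ S : Finset α, evalB (flipV X S) φ ≠ evalB X φ → d ≤ S.card

theorem isFlipDist_var (v : α) (X : α → Bool) : IsFlipDist (.var v) X 1 where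
  exists_flip := ⟨{v}, by simp [varsOf], rfl, by simp [evalB, flipV]⟩
  le_card S hS := by
    have hv : v ∈ S := by
      by_contra hv
      exact hS (by simp [evalB, flipV, hv])
    exact Finset.card_pos.2 ⟨v, hv⟩

namespace IsFlipDist

variable {φ : Fm α} {X : α → Bool} {d : ℕ}

theorem fmDist_eq (h : IsFlipDist φ X d) : fmDist φ X = d := by
  obtain ⟨S, -, hcard, hflip⟩ := h.exists_flip
  refine le_antisymm (Nat.sInf_le ⟨S, hcard, hflip⟩) ?_
  refine le_csInf ⟨_, S, rfl, hflip⟩ ?_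
  rintro k ⟨T, rfl, hT⟩
  exact h.le_card T hT

theorem exists_flip_xor (h : IsFlipDist φ X d) (p : Bool) :
    ∃ S : Finset α, (∀ v ∈ S, v ∈ varsOf φ) ∧ S.card = (if p then d else 0) ∧
      evalB (flipV X S) φ = (evalB X φ ^^ p) := by
  cases p
  · exact ⟨∅, by simp, by simp, by simp [evalB_flipV_empty]⟩
  · obtain ⟨S, hsub, hcard, hflip⟩ := h.exists_flip
    exact ⟨S, hsub, by simpa using hcard, by simpa using Bool.eq_not.2 hflip⟩

theorem ite_le_card_filter (h : IsFlipDist φ X d) {S : Finset α} {p : Bool}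
    (hp : evalB (flipV X S) φ = (evalB X φ ^^ p)) :
    (if p then d else 0) ≤ (S.filter (· ∈ varsOf φ)).card := by
  cases p
  · simp
  · exact h.le_card _ (by simp [evalB_flipV_filter, hp])

theorem not (h : IsFlipDist φ X d) : IsFlipDist (.not φ) X d where
  exists_flip := by simpa [varsOf, evalB] using h.exists_flip
  le_card S hS := h.le_card S (by simpa [evalB] using hS)

end IsFlipDist

end FlipDistance

section Gate

variable {α : Type} [DecidableEq α] {g : Bool → Bool → Bool} {φ φl φr : Fm α} {X : α → Bool}
  {dl dr : ℕ}

theorem IsFlipDist.gate (hg : ∀ a b, ∃ p q : Bool, g (a ^^ p) (b ^^ q) ≠ g a b)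
    (heval : ∀ Y, evalB Y φ = g (evalB Y φl) (evalB Y φr))
    (hvars : varsOf φ = varsOf φl ++ varsOf φr) (hdisj : (varsOf φl).Disjoint (varsOf φr))
    (hl : IsFlipDist φl X dl) (hr : IsFlipDist φr X dr) :
    IsFlipDist φ X (gateDist g (evalB X φl) (evalB X φr) dl dr) where
  exists_flip := by
    obtain ⟨p, q, hpq, hcost⟩ := exists_gateDist_eq hg (evalB X φl) (evalB X φr) dl dr
    obtain ⟨Sl, hSl, hcardl, hevall⟩ := hl.exists_flip_xor p
    obtain ⟨Sr, hSr, hcardr, hevalr⟩ := hr.exists_flip_xor q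
    have hSr_l : ∀ v ∈ Sr, v ∉ varsOf φl := fun v hv hvl => hdisj hvl (hSr v hv)
    have hSl_r : ∀ v ∈ Sl, v ∉ varsOf φr := fun v hv hvr => hdisj (hSl v hv) hvr
    refine ⟨Sl ∪ Sr, fun v hv => ?_, ?_, ?_⟩
    · rw [hvars, List.mem_append]
      exact (Finset.mem_union.1 hv).imp (hSl v) (hSr v)
    · rw [Finset.card_union_of_disjoint
        (Finset.disjoint_left.2 fun v hvl hvr => hSl_r v hvl (hSr v hvr)), hcardl, hcardr, hcost]
    · rw [heval, heval, evalB_flipV_union_of_disjoint X hSr_l, Finset.union_comm,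
        evalB_flipV_union_of_disjoint X hSl_r, hevall, hevalr]
      exact hpq
  le_card S hS := by
    set p := evalB X φl ^^ evalB (flipV X S) φl
    set q := evalB X φr ^^ evalB (flipV X S) φr
    have hp : evalB (flipV X S) φl = (evalB X φl ^^ p) := (Bool.bne_self_left _ _).symm
    have hq : evalB (flipV X S) φr = (evalB X φr ^^ q) := (Bool.bne_self_left _ _).symm
    have hsplit : (S.filter (· ∈ varsOf φr)) ⊆ S.filter (fun v => ¬ v ∈ varsOf φl) :=
      fun v hv => by
        rw [Finset.mem_filter] at hv ⊢
        exact ⟨hv.1, fun hvl => hdisj hvl hv.2⟩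
    calc gateDist g (evalB X φl) (evalB X φr) dl dr
        ≤ (if p then dl else 0) + (if q then dr else 0) :=
          gateDist_le (by rwa [← hp, ← hq, ← heval, ← heval]) dl dr
      _ ≤ (S.filter (· ∈ varsOf φl)).card + (S.filter (· ∈ varsOf φr)).card :=
          add_le_add (hl.ite_le_card_filter hp) (hr.ite_le_card_filter hq)
      _ ≤ S.card := (Nat.add_le_add_left (Finset.card_le_card hsplit) _).trans_eq
          (Finset.card_filter_add_card_filter_not _)

end Gate

theorem isFlipDist_deps {α : Type} [DecidableEq α] {φ : Fm α} (X : α → Bool)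
    (hro : ReadOnce φ) : IsFlipDist φ X (deps X φ) := by
  induction φ with
  | var v => exact isFlipDist_var v X
  | not φ ih => exact (ih hro).not
  | and φ ψ ihφ ihψ =>
    obtain ⟨hφ, hψ, hdisj⟩ := List.nodup_append'.1 hro
    exact IsFlipDist.gate (g := (· && ·)) (by decide) (fun _ => rfl) rfl hdisj (ihφ hφ) (ihψ hψ)
  | or φ ψ ihφ ihψ =>
    obtain ⟨hφ, hψ, hdisj⟩ := List.nodup_append'.1 hro
    exact IsFlipDist.gate (g := (· || ·)) (by decide) (fun _ => rfl) rfl hdisj (ihφ hφ) (ihψ hψ)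
  | xor φ ψ ihφ ihψ =>
    obtain ⟨hφ, hψ, hdisj⟩ := List.nodup_append'.1 hro
    exact IsFlipDist.gate (g := Bool.xor) (by decide) (fun _ => rfl) rfl hdisj (ihφ hφ) (ihψ hψ)

theorem deps_eq_fmDist_general {α : Type} [DecidableEq α] (φ : Fm α) (X : α → Bool)
    (hro : ReadOnce φ) :
    deps X φ = fmDist φ X :=
  (isFlipDist_deps X hro).fmDist_eq.symm

/-- For every non-constant read-once formula, the DEPENDS recursion computes
the flip distance. -/
theorem deps_eq_fmDist {α : Type} [DecidableEq α] (φ : Fm α) (X : α → Bool)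
    (hro : ReadOnce φ)
    (hnc : ∃ S : Finset α, evalB (flipV X S) φ ≠ evalB X φ) :
    deps X φ = fmDist φ X :=
  deps_eq_fmDist_general φ X hro
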